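/- arXiv:1908.08910 — 5 statements merged into one kernel-verified Lean document; each statement's English description precedes it below -/
import Mathlib

section
/- A permutation σ is in the image of the pop-stack operator P if and only if for every pair (Rᵢ, Rᵢ₊₁) of adjacent maximal ascending runs of σ, one has min Rᵢ < max Rᵢ₊₁. -/
/-- The maximal descending runs of a list, in order. -/
def descRuns : List ℕ → List (List ℕ)
  | [] => []
  | a :: l =>
    match descRuns l with
    | (b :: r) :: rs => if b < a then (a :: b :: r) :: rs else [a] :: (b :: r) :: rs
    | _ => [[a]]

/-- The maximal ascending runs of a list, in order. -/
def ascRuns : List ℕ → List (List ℕ)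
  | [] => []
  | a :: l =>
    match ascRuns l with
    | (b :: r) :: rs => if a < b then (a :: b :: r) :: rs else [a] :: (b :: r) :: rs
    | _ => [[a]]

/-- The pop-stack operator: reverse each maximal descending run. -/
def popStack (l : List ℕ) : List ℕ := ((descRuns l).map List.reverse).flatten

/-- `l` is (the one-line notation of) a permutation of `[n] = {1,…,n}`. -/
def IsPermOf (n : ℕ) (l : List ℕ) : Prop := l.Perm (List.range' 1 n)

/-- Minimum of a list of naturals. -/
noncomputable def lmin (l : List ℕ) : ℕ := sInf {x | x ∈ l}

/-- Maximum of a list of naturals. -/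
def lmax (l : List ℕ) : ℕ := l.foldr max 0

/-- Minimum of a finset of naturals. -/
noncomputable def bmin (B : Finset ℕ) : ℕ := sInf (B : Set ℕ)

/-- Maximum of a finset of naturals. -/
def bmax (B : Finset ℕ) : ℕ := B.sup id

/-- A ballot (ordered set partition) with underlying set `U`. -/
def IsBallot (U : Finset ℕ) (l : List (Finset ℕ)) : Prop :=
  (∀ B ∈ l, B.Nonempty) ∧ l.Pairwise Disjoint ∧ l.foldr (· ∪ ·) ∅ = U

/-- A ballot is overlapping if adjacent blocks satisfy
`max Bᵢ > min Bᵢ₊₁` and `min Bᵢ < max Bᵢ₊₁`. -/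
def Overlapping (l : List (Finset ℕ)) : Prop :=
  l.Chain' fun B C => bmin C < bmax B ∧ bmin B < bmax C

/-- `σ` is pop-stacked: it is the image of some permutation of `[n]` under `popStack`. -/
def IsPopStacked (n : ℕ) (σ : List ℕ) : Prop :=
  ∃ π, IsPermOf n π ∧ popStack π = σ

/-- `f_{c,d}(n)`: overlapping ballots of `[n]` whose last block has min `c` and max `d`. -/
noncomputable def fcd (c d n : ℕ) : ℕ :=
  Nat.card {l : List (Finset ℕ) // IsBallot (Finset.Icc 1 n) l ∧ Overlapping l ∧
    ∃ B, l.getLast? = some B ∧ bmin B = c ∧ bmax B = d}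

/-- `f_{c,d}(n,k)`: overlapping ballots of `[n]` with `k` blocks whose last block has
min `c` and max `d`. -/
noncomputable def fcdk (c d n k : ℕ) : ℕ :=
  Nat.card {l : List (Finset ℕ) // IsBallot (Finset.Icc 1 n) l ∧ Overlapping l ∧
    l.length = k ∧ ∃ B, l.getLast? = some B ∧ bmin B = c ∧ bmax B = d}

/-- The number of pop-stacked permutations of `[n]`. -/
noncomputable def popCount (n : ℕ) : ℕ :=
  Nat.card {σ : List ℕ // IsPermOf n σ ∧ IsPopStacked n σ}

/-- The number of pop-stacked permutations of `[n]` with exactly `k` ascending runs. -/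
noncomputable def popCountK (n k : ℕ) : ℕ :=
  Nat.card {σ : List ℕ // IsPermOf n σ ∧ IsPopStacked n σ ∧ (ascRuns σ).length = k}

/-- Greedy sorting with a pop-stack whose contents increase from top to bottom:
push when possible, otherwise pop the whole stack. -/
def greedyPop : List ℕ → List ℕ → List ℕ
  | stack, [] => stack
  | [], a :: rest => greedyPop [a] rest
  | t :: s, a :: rest =>
    if a < t then greedyPop (a :: t :: s) rest
    else (t :: s) ++ greedyPop [a] rest

/-!
Write `P(π)` as the concatenation of the blocks `Dᵢʳ`, the reversed descending runs of `π`.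
Each block is increasing, and as `π` has no repeated entries the last entry of `Dᵢ` is smaller
than the first entry of `Dᵢ₊₁`, i.e. `min Dᵢʳ < max Dᵢ₊₁ʳ`. For nonempty lists, `min R < max S`
says that some entry of `R` is smaller than some entry of `S`, a condition that survives
enlarging `R` and `S`; since every ascending run of `P(π)` is a union of consecutive blocks,
it passes from the blocks to the runs.

Conversely, if the ascending runs `Rᵢ` of `σ` satisfy `min Rᵢ < max Rᵢ₊₁`, then in
`π = R₁ʳ ⋯ Rₘʳ` the junction between `Rᵢʳ` and `Rᵢ₊₁ʳ` is an ascent, so the descending runs of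
`π` are exactly the `Rᵢʳ` and `P(π) = σ`.
-/

namespace List

variable {α : Type*} {r : α → α → Bool}

theorem IsChain.and {R S : α → α → Prop} {l : List α} (hR : l.IsChain R) (hS : l.IsChain S) :
    l.IsChain fun a b ↦ R a b ∧ S a b :=
  isChain_iff_getElem.2 fun i hi ↦ ⟨isChain_iff_getElem.1 hR i hi, isChain_iff_getElem.1 hS i hi⟩

theorem flatten_map_reverse_perm (l : List (List α)) : (l.map reverse).flatten ~ l.flatten :=
  Perm.flatten_congr (forall₂_map_left_iff.2 (forall₂_same.2 fun _ _ ↦ reverse_perm _))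

theorem nil_notMem_map_reverse_splitBy (r : α → α → Bool) (l : List α) :
    [] ∉ (l.splitBy r).map reverse := by
  simp [nil_notMem_splitBy r l]

theorem isChain_of_mem_map_reverse_splitBy {l m : List α} (h : m ∈ (l.splitBy r).map reverse) :
    m.IsChain fun x y ↦ r y x := by
  obtain ⟨m, hm, rfl⟩ := mem_map.1 h
  exact isChain_reverse.2 (isChain_of_mem_splitBy hm)

theorem splitBy_append_of_rel {b m R : List α} {rs : List (List α)}
    (hb : b.IsChain fun x y ↦ r x y) (hm : m.splitBy r = R :: rs)
    (hbm : ∀ x ∈ b.getLast?, ∀ y ∈ m.head?, r x y) :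
    (b ++ m).splitBy r = (b ++ R) :: rs := by
  have hR : R ≠ [] := ne_nil_of_mem_splitBy (hm ▸ mem_cons_self)
  obtain ⟨rfl, hnil, hchain, hjunc⟩ := splitBy_eq_iff.1 hm
  rw [flatten_cons, head?_append_of_ne_nil _ hR] at hbm
  rw [splitBy_eq_iff, isChain_cons]
  refine ⟨by simp, by simpa [hR] using hnil, ?_, ?_, hjunc.tail⟩
  · rintro l (_ | ⟨_, hl⟩)
    · exact hb.append (hchain R mem_cons_self) hbm
    · exact hchain l (mem_cons_of_mem _ hl)
  · intro S hS
    obtain ⟨_, hS', h⟩ := hjunc.rel_head? hS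
    exact ⟨by simp [hR], hS', by rwa [getLast_append_right hR]⟩

theorem splitBy_cons_of_splitBy_eq {a b : α} {l m : List α} {rs : List (List α)}
    (h : l.splitBy r = (b :: m) :: rs) :
    (a :: l).splitBy r = if r a b then (a :: b :: m) :: rs else [a] :: (b :: m) :: rs := by
  obtain ⟨l', rfl⟩ : ∃ l', l = b :: l' := by
    rw [← flatten_splitBy r l, h]
    exact ⟨_, rfl⟩
  split_ifs with hab
  · exact splitBy_append_of_rel (b := [a]) (isChain_singleton a) h (by simpa using hab)
  · rw [← singleton_append, splitBy_append_cons _ (by simpa using hab), h,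
      splitBy_of_isChain (cons_ne_nil a []) (isChain_singleton a)]
    rfl

theorem splitBy_append_eq_or {b m R : List α} {rs : List (List α)} (hb : b ≠ [])
    (hbc : b.IsChain fun x y ↦ r x y) (hm : m.splitBy r = R :: rs) :
    (b ++ m).splitBy r = (b ++ R) :: rs ∨ (b ++ m).splitBy r = b :: R :: rs := by
  have hm₀ : m ≠ [] := splitBy_ne_nil.1 (hm ▸ cons_ne_nil R rs)
  cases h : r (b.getLast hb) (m.head hm₀)
  · right
    rw [splitBy_append (by simp [getLast?_eq_some_getLast hb, head?_eq_some_head hm₀, h]),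
      splitBy_of_isChain hb hbc, hm]
    rfl
  · left
    exact splitBy_append_of_rel hbc hm
      (by simp [getLast?_eq_some_getLast hb, head?_eq_some_head hm₀, h])

theorem exists_splitBy_append_eq {b : List α} (m : List α) (hb : b ≠ [])
    (hbc : b.IsChain fun x y ↦ r x y) : ∃ t rs, (b ++ m).splitBy r = (b ++ t) :: rs := by
  rcases hm : m.splitBy r with _ | ⟨R, rs⟩
  · rw [splitBy_eq_nil.1 hm, append_nil, splitBy_of_isChain hb hbc]
    exact ⟨[], [], by simp⟩
  · rcases splitBy_append_eq_or hb hbc hm with h | h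
    · exact ⟨R, rs, h⟩
    · exact ⟨[], R :: rs, by simp [h]⟩

theorem isChain_exists_rel_splitBy_flatten {s : α → α → Prop} :
    ∀ {bs : List (List α)}, [] ∉ bs → (∀ b ∈ bs, b.IsChain fun x y ↦ r x y) →
      bs.IsChain (fun B C ↦ ∃ x ∈ B, ∃ y ∈ C, s x y) →
      (bs.flatten.splitBy r).IsChain (fun R S ↦ ∃ x ∈ R, ∃ y ∈ S, s x y)
  | [], _, _, _ => by simp
  | [b], hnil, hchain, _ => by
    rw [flatten_singleton, splitBy_of_isChain (by simpa [eq_comm] using hnil)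
      (hchain b mem_cons_self)]
    exact isChain_singleton b
  | b :: c :: bs, hnil, hchain, hbs => by
    have ih := isChain_exists_rel_splitBy_flatten (fun h ↦ hnil (mem_cons_of_mem b h))
      (fun d hd ↦ hchain d (mem_cons_of_mem b hd)) hbs.tail
    obtain ⟨t, rs, hc⟩ := exists_splitBy_append_eq bs.flatten
      (fun h ↦ hnil (h ▸ mem_cons_of_mem b mem_cons_self)) (hchain c (by simp))
    rw [← flatten_cons] at hc
    rw [hc] at ih
    rw [flatten_cons]
    rcases splitBy_append_eq_or (fun h ↦ hnil (h ▸ mem_cons_self)) (hchain b mem_cons_self)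
      hc with h | h <;> rw [h]
    · refine ih.tail.cons fun S hS ↦ ?_
      obtain ⟨x, hx, y, hy, hxy⟩ := ih.rel_head? hS
      exact ⟨x, mem_append_right b hx, y, hy, hxy⟩
    · refine ih.cons fun S hS ↦ ?_
      obtain rfl : c ++ t = S := by simpa using hS
      obtain ⟨x, hx, y, hy, hxy⟩ := (isChain_cons_cons.1 hbs).1
      exact ⟨x, hx, y, mem_append_left t hy, hxy⟩

end List

open List

theorem ascRuns_eq_splitBy (l : List ℕ) : ascRuns l = l.splitBy (· < ·) := by
  induction l with
  | nil => rfl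
  | cons a l ih =>
    rcases h : l.splitBy (· < ·) with _ | ⟨_ | ⟨b, m⟩, rs⟩
    · rw [splitBy_eq_nil.1 h]
      rfl
    · exact absurd (h ▸ mem_cons_self) (nil_notMem_splitBy _ l)
    · simp only [ascRuns, ih, h, splitBy_cons_of_splitBy_eq h, decide_eq_true_eq]

theorem descRuns_eq_splitBy (l : List ℕ) : descRuns l = l.splitBy (· > ·) := by
  induction l with
  | nil => rfl
  | cons a l ih =>
    rcases h : l.splitBy (· > ·) with _ | ⟨_ | ⟨b, m⟩, rs⟩
    · rw [splitBy_eq_nil.1 h]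
      rfl
    · exact absurd (h ▸ mem_cons_self) (nil_notMem_splitBy _ l)
    · simp only [descRuns, ih, h, splitBy_cons_of_splitBy_eq h, decide_eq_true_eq, gt_iff_lt]

theorem popStack_eq_flatten_map_reverse_splitBy (π : List ℕ) :
    popStack π = ((π.splitBy (· > ·)).map reverse).flatten := by
  rw [popStack, descRuns_eq_splitBy]

theorem lt_lmax_iff {l : List ℕ} {x : ℕ} : x < lmax l ↔ ∃ y ∈ l, x < y := by
  induction l with
  | nil => simp [lmax]
  | cons a l ih => simp_all [lmax]

theorem lmin_lt_iff {l : List ℕ} {y : ℕ} (hl : l ≠ []) : lmin l < y ↔ ∃ x ∈ l, x < y :=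
  csInf_lt_iff (OrderBot.bddBelow _) ⟨l.head hl, head_mem hl⟩

theorem lmin_lt_lmax_iff {R S : List ℕ} (hR : R ≠ []) :
    lmin R < lmax S ↔ ∃ x ∈ R, ∃ y ∈ S, x < y := by
  simp only [lmin_lt_iff hR, lt_lmax_iff]

theorem isChain_lmin_lt_lmax_iff {rs : List (List ℕ)} (hrs : [] ∉ rs) :
    rs.IsChain (fun R S ↦ lmin R < lmax S) ↔ rs.IsChain (fun R S ↦ ∃ x ∈ R, ∃ y ∈ S, x < y) :=
  IsChain.iff_of_mem_imp fun _ _ hR _ ↦ lmin_lt_lmax_iff (ne_of_mem_of_not_mem hR hrs)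

theorem isChain_exists_lt_map_reverse_splitBy_gt {π : List ℕ} (hπ : π.Nodup) :
    ((π.splitBy (· > ·)).map reverse).IsChain (fun B C ↦ ∃ x ∈ B, ∃ y ∈ C, x < y) := by
  have hdisj : (π.splitBy (· > ·)).Pairwise Disjoint :=
    (nodup_flatten.1 (by rwa [flatten_splitBy])).2
  rw [isChain_map]
  refine (hdisj.isChain.and (isChain_getLast_head_splitBy _ π)).imp ?_
  rintro D E ⟨hDE, hD, hE, hnot⟩
  refine ⟨D.getLast hD, mem_reverse.2 (getLast_mem hD), E.head hE, mem_reverse.2 (head_mem hE), ?_⟩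
  refine lt_of_le_of_ne (by simpa using hnot) fun heq ↦ ?_
  exact hDE (getLast_mem hD) (heq ▸ head_mem hE)

theorem splitBy_gt_flatten_map_reverse_splitBy_lt {σ : List ℕ}
    (h : (σ.splitBy (· < ·)).IsChain (fun R S ↦ ∃ x ∈ R, ∃ y ∈ S, x < y)) :
    ((σ.splitBy (· < ·)).map reverse).flatten.splitBy (· > ·) =
      (σ.splitBy (· < ·)).map reverse := by
  refine splitBy_flatten (nil_notMem_map_reverse_splitBy _ σ)
    (fun _ hm ↦ isChain_of_mem_map_reverse_splitBy hm) ?_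
  rw [isChain_map]
  refine h.imp_of_mem_imp fun R S hR hS ⟨x, hx, y, hy, hxy⟩ ↦ ?_
  have hRinc : R.Pairwise (· ≤ ·) :=
    (isChain_iff_pairwise.1 (by simpa using isChain_of_mem_splitBy hR)).imp le_of_lt
  have hSinc : S.Pairwise (· ≤ ·) :=
    (isChain_iff_pairwise.1 (by simpa using isChain_of_mem_splitBy hS)).imp le_of_lt
  refine ⟨reverse_ne_nil_iff.2 (ne_nil_of_mem hx), reverse_ne_nil_iff.2 (ne_nil_of_mem hy), ?_⟩
  simp only [getLast_reverse, head_reverse, gt_iff_lt, decide_eq_false_iff_not, not_lt]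
  exact ((hRinc.rel_head hx).trans hxy.le).trans (hSinc.rel_getLast hy)

/-- a permutation is pop-stacked iff each pair of adjacent ascending runs
`(Rᵢ, Rᵢ₊₁)` satisfies `min Rᵢ < max Rᵢ₊₁`. -/
theorem statement1 (n : ℕ) (σ : List ℕ) (hσ : IsPermOf n σ) :
    (∃ π, IsPermOf n π ∧ popStack π = σ) ↔
      (ascRuns σ).Chain' (fun R S => lmin R < lmax S) := by
  rw [List.Chain', ascRuns_eq_splitBy, isChain_lmin_lt_lmax_iff (nil_notMem_splitBy _ σ)]
  constructor
  · rintro ⟨π, hπ, rfl⟩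
    rw [popStack_eq_flatten_map_reverse_splitBy]
    exact isChain_exists_rel_splitBy_flatten (nil_notMem_map_reverse_splitBy _ π)
      (fun _ hm ↦ by simpa using isChain_of_mem_map_reverse_splitBy hm)
      (isChain_exists_lt_map_reverse_splitBy_gt (hπ.nodup_iff.2 nodup_range'))
  · intro h
    refine ⟨((σ.splitBy (· < ·)).map reverse).flatten, ?_, ?_⟩
    · exact (flatten_map_reverse_perm _).trans (by rwa [flatten_splitBy])
    · rw [popStack_eq_flatten_map_reverse_splitBy, splitBy_gt_flatten_map_reverse_splitBy_lt h,
        map_map]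
      rw [reverse_involutive.comp_self, map_id, flatten_splitBy]
end

section
/- For n ≥ 1 and c ∈ [n], the number of overlapping ballots of [n] whose last block is the singleton {c} equals ∑_{a=1}^{c−1} ∑_{b=c}^{n−1} f_{a,b}(n−1), where f_{a,b}(m) counts overlapping ballots of [m] whose last block B satisfies min B = a and max B = b, together with the boundary case that the single-block ballot contributes 1 exactly when c = 1 and c = n. -/
/-!
Deleting a last block `{c}` and relabelling order-isomorphically is a bijection onto the
overlapping ballots of `[n - 1]` whose last block `B` satisfies `min B < c ≤ max B`: once `B`
is relabelled to avoid `c`, these are exactly the overlap conditions with the block `{c}`.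
The empty ballot of `[0]` accounts for the single-block ballot `{1}` of `[1]`. Sorting by `(min B, max B)` gives the
double sum.
-/

open Finset

section MinMax

lemma bmin_mem {B : Finset ℕ} (h : B.Nonempty) : bmin B ∈ B := by
  exact_mod_cast Nat.sInf_mem (s := (B : Set ℕ)) (by exact_mod_cast h)

lemma bmin_le {B : Finset ℕ} {x : ℕ} (hx : x ∈ B) : bmin B ≤ x :=
  Nat.sInf_le (by exact_mod_cast hx)

lemma bmax_mem {B : Finset ℕ} (h : B.Nonempty) : bmax B ∈ B := by
  obtain ⟨b, hb, he⟩ := B.exists_mem_eq_sup h id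
  rwa [bmax, he]

lemma le_bmax {B : Finset ℕ} {x : ℕ} (hx : x ∈ B) : x ≤ bmax B :=
  le_sup (f := id) hx

@[simp] lemma bmin_singleton (c : ℕ) : bmin {c} = c := by simp [bmin]

@[simp] lemma bmax_singleton (c : ℕ) : bmax {c} = c := by simp [bmax]

lemma bmin_image {f : ℕ → ℕ} (hf : Monotone f) (hf0 : f 0 = 0) (B : Finset ℕ) :
    bmin (B.image f) = f (bmin B) := by
  rcases B.eq_empty_or_nonempty with rfl | h
  · simp [bmin, hf0]
  obtain ⟨x, hx, hfx⟩ := mem_image.mp (bmin_mem (h.image f))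
  refine le_antisymm (bmin_le (mem_image_of_mem f (bmin_mem h))) ?_
  rw [← hfx]
  exact hf (bmin_le hx)

lemma bmax_image {f : ℕ → ℕ} (hf : Monotone f) (hf0 : f 0 = 0) (B : Finset ℕ) :
    bmax (B.image f) = f (bmax B) := by
  rw [bmax, bmax, sup_image, apply_sup_eq_sup_comp_of_linearOrder f hf hf0]
  rfl

end MinMax

/-- The order embedding `ℕ → ℕ \ {c}`, the analogue of `Fin.succAbove` on `ℕ`. -/
def natSuccAbove (c x : ℕ) : ℕ := if c ≤ x then x + 1 else x

/-- The analogue of `Fin.predAbove` on `ℕ`. -/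
def natPredAbove (c x : ℕ) : ℕ := if c < x then x - 1 else x

section SuccAbove

variable {c : ℕ}

lemma natSuccAbove_strictMono (c : ℕ) : StrictMono (natSuccAbove c) := by
  intro x y h
  simp only [natSuccAbove]
  split_ifs <;> omega

lemma natSuccAbove_zero (hc : 1 ≤ c) : natSuccAbove c 0 = 0 :=
  if_neg (by omega)

lemma natSuccAbove_ne (c x : ℕ) : natSuccAbove c x ≠ c := by
  simp only [natSuccAbove]
  split_ifs <;> omega

lemma natSuccAbove_lt_iff {x : ℕ} : natSuccAbove c x < c ↔ x < c := by
  simp only [natSuccAbove]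
  split_ifs <;> omega

lemma lt_natSuccAbove_iff {x : ℕ} : c < natSuccAbove c x ↔ c ≤ x := by
  simp only [natSuccAbove]
  split_ifs <;> omega

lemma natPredAbove_leftInverse (c : ℕ) :
    Function.LeftInverse (natPredAbove c) (natSuccAbove c) := by
  intro x
  simp only [natSuccAbove, natPredAbove]
  split_ifs <;> omega

lemma insert_image_natSuccAbove_Icc {m : ℕ} (hc : 1 ≤ c) (hcm : c ≤ m + 1) :
    insert c ((Icc 1 m).image (natSuccAbove c)) = Icc 1 (m + 1) := by
  ext x
  simp only [mem_insert, mem_image, mem_Icc, natSuccAbove]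
  constructor
  · rintro (rfl | ⟨y, hy, rfl⟩)
    · omega
    · split_ifs <;> omega
  · intro hx
    rcases lt_trichotomy x c with h | rfl | h
    · exact Or.inr ⟨x, by omega, if_neg (by omega)⟩
    · exact Or.inl rfl
    · exact Or.inr ⟨x - 1, by omega, by split_ifs <;> omega⟩

end SuccAbove

section Ballot

lemma mem_foldr_union {α : Type*} [DecidableEq α] {x : α} {l : List (Finset α)} :
    x ∈ l.foldr (· ∪ ·) ∅ ↔ ∃ B ∈ l, x ∈ B := by
  induction l <;> simp [*]

lemma foldr_union_map_image (f : ℕ → ℕ) (l : List (Finset ℕ)) :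
    (l.map (image f)).foldr (· ∪ ·) ∅ = (l.foldr (· ∪ ·) ∅).image f := by
  induction l <;> simp [*, image_union]

variable {U : Finset ℕ} {l : List (Finset ℕ)}

lemma IsBallot.subset (hl : IsBallot U l) {B : Finset ℕ} (hB : B ∈ l) : B ⊆ U := by
  intro x hx
  rw [← hl.2.2, mem_foldr_union]
  exact ⟨B, hB, hx⟩

lemma IsBallot.nodup (hl : IsBallot U l) : l.Nodup :=
  hl.2.1.imp_of_mem fun hB _ hBC hBB' => by
    subst hBB'
    exact (hl.1 _ hB).ne_empty (disjoint_self_iff_empty _ |>.mp hBC)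

lemma isBallot_finite (U : Finset ℕ) : {l | IsBallot U l}.Finite := by
  refine ((List.finite_length_le U.powerset (Fintype.card U.powerset)).image
    (List.map Subtype.val)).subset ?_
  intro l hl
  lift l to List U.powerset using fun B hB => mem_powerset.mpr (hl.subset hB)
  exact ⟨l, (hl.nodup.of_map _).length_le_card, rfl⟩

lemma isBallot_nil_iff : IsBallot U [] ↔ U = ∅ := by
  simp [IsBallot, eq_comm]

lemma isBallot_map_image_iff {f : ℕ → ℕ} (hf : Function.Injective f) :
    IsBallot (U.image f) (l.map (image f)) ↔ IsBallot U l := by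
  simp [IsBallot, foldr_union_map_image, (image_injective hf).eq_iff, List.pairwise_map,
    disjoint_image hf]

lemma isBallot_append_singleton_iff {c : ℕ} (hc : c ∉ U) :
    IsBallot (insert c U) (l ++ [{c}]) ↔ IsBallot U l := by
  have key : (∀ B ∈ l, c ∉ B) → (l.foldr (· ∪ ·) ∅ = U ↔
      (l ++ [{c}]).foldr (· ∪ ·) ∅ = insert c U) := by
    intro hcl
    have hc' : c ∉ l.foldr (· ∪ ·) ∅ := by simpa [mem_foldr_union] using hcl
    have happ : (l ++ [{c}]).foldr (· ∪ ·) ∅ = insert c (l.foldr (· ∪ ·) ∅) := by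
      ext x
      rw [mem_foldr_union, mem_insert, mem_foldr_union]
      simp [or_comm]
    rw [happ]
    refine ⟨fun h => h ▸ rfl, fun h => ?_⟩
    rw [← erase_insert hc', h, erase_insert hc]
  constructor
  · rintro ⟨hne, hdisj, hun⟩
    rw [List.pairwise_append] at hdisj
    have hcl : ∀ B ∈ l, c ∉ B := fun B hB =>
      disjoint_singleton_right.mp (hdisj.2.2 B hB {c} (List.mem_singleton_self _))
    exact ⟨fun B hB => hne B (List.mem_append_left _ hB), hdisj.1, (key hcl).mpr hun⟩
  · intro hl
    have hcl : ∀ B ∈ l, c ∉ B := fun B hB hcB => hc (hl.subset hB hcB)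
    refine ⟨?_, ?_, (key hcl).mp hl.2.2⟩
    · simpa [or_imp, forall_and] using hl.1
    · simpa [List.pairwise_append, hl.2.1] using hcl

lemma IsBallot.map_image_map_image {D : List (Finset ℕ)} {f g : ℕ → ℕ}
    (hfg : Function.LeftInverse g f) (hD : IsBallot (U.image f) D) :
    (D.map (image g)).map (image f) = D := by
  rw [List.map_map]
  refine (List.map_congr_left fun B hB => ?_).trans D.map_id
  calc (B.image g).image f = B.image (f ∘ g) := image_image
    _ = B.image id := image_congr fun x hx => by
      obtain ⟨y, -, rfl⟩ := mem_image.mp (hD.subset hB hx)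
      simp [hfg y]
    _ = B := image_id

end Ballot

section Overlapping

variable {l : List (Finset ℕ)}

lemma overlapping_iff_isChain :
    Overlapping l ↔ l.IsChain fun B C => bmin C < bmax B ∧ bmin B < bmax C :=
  Iff.rfl

lemma overlapping_map_image_iff {f : ℕ → ℕ} (hf : StrictMono f) (hf0 : f 0 = 0) :
    Overlapping (l.map (image f)) ↔ Overlapping l := by
  simp only [overlapping_iff_isChain, List.isChain_map, bmin_image hf.monotone hf0,
    bmax_image hf.monotone hf0, hf.lt_iff_lt]

lemma overlapping_append_singleton_iff {c : ℕ} :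
    Overlapping (l ++ [{c}]) ↔ Overlapping l ∧ ∀ B ∈ l.getLast?, bmin B < c ∧ c < bmax B := by
  simp [overlapping_iff_isChain, List.isChain_append, and_comm]

end Overlapping

/-- Relabel a ballot of `[m]` to avoid the value `c` and append the block `{c}`; this inverts
the deletion of a last block `{c}` followed by order-isomorphic relabelling. -/
def extendBySingleton (c : ℕ) (l : List (Finset ℕ)) : List (Finset ℕ) :=
  l.map (image (natSuccAbove c)) ++ [{c}]

section ExtendBySingleton

variable {m c : ℕ} {l : List (Finset ℕ)}

lemma extendBySingleton_injective (c : ℕ) : Function.Injective (extendBySingleton c) :=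
  fun _ _ h => List.map_injective_iff.mpr (image_injective (natSuccAbove_strictMono c).injective)
    (List.append_cancel_right h)

lemma getLast?_extendBySingleton : (extendBySingleton c l).getLast? = some {c} :=
  List.getLast?_concat

lemma isBallot_extendBySingleton_iff (hc : 1 ≤ c) (hcm : c ≤ m + 1) :
    IsBallot (Icc 1 (m + 1)) (extendBySingleton c l) ↔ IsBallot (Icc 1 m) l := by
  rw [extendBySingleton, ← insert_image_natSuccAbove_Icc hc hcm,
    isBallot_append_singleton_iff (by simp [natSuccAbove_ne]),
    isBallot_map_image_iff (natSuccAbove_strictMono c).injective]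

lemma overlapping_extendBySingleton_iff (hc : 1 ≤ c) :
    Overlapping (extendBySingleton c l) ↔
      Overlapping l ∧ ∀ B ∈ l.getLast?, bmin B < c ∧ c ≤ bmax B := by
  have hmono := (natSuccAbove_strictMono c).monotone
  rw [extendBySingleton, overlapping_append_singleton_iff,
    overlapping_map_image_iff (natSuccAbove_strictMono c) (natSuccAbove_zero hc),
    List.getLast?_map]
  simp [bmin_image hmono (natSuccAbove_zero hc), bmax_image hmono (natSuccAbove_zero hc),
    natSuccAbove_lt_iff, lt_natSuccAbove_iff]

lemma exists_extendBySingleton_eq {L : List (Finset ℕ)} (hc : 1 ≤ c) (hcm : c ≤ m + 1)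
    (hL : IsBallot (Icc 1 (m + 1)) L) (hlast : L.getLast? = some {c}) :
    ∃ l, extendBySingleton c l = L := by
  have hsplit : L.dropLast ++ [{c}] = L := List.dropLast_append_getLast? _ hlast
  rw [← hsplit, ← insert_image_natSuccAbove_Icc hc hcm,
    isBallot_append_singleton_iff (by simp [natSuccAbove_ne])] at hL
  exact ⟨L.dropLast.map (image (natPredAbove c)), by
    rw [extendBySingleton, hL.map_image_map_image (natPredAbove_leftInverse c), hsplit]⟩

end ExtendBySingleton

theorem card_overlapping_getLast?_eq_singleton {m c : ℕ} (hc : 1 ≤ c) (hcm : c ≤ m + 1) :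
    Nat.card {L : List (Finset ℕ) // IsBallot (Icc 1 (m + 1)) L ∧ Overlapping L ∧
        L.getLast? = some {c}} =
      Nat.card {l : List (Finset ℕ) // IsBallot (Icc 1 m) l ∧ Overlapping l ∧
        ∀ B ∈ l.getLast?, bmin B < c ∧ c ≤ bmax B} := by
  have hiff : ∀ l, (IsBallot (Icc 1 (m + 1)) (extendBySingleton c l) ∧
      Overlapping (extendBySingleton c l) ∧ (extendBySingleton c l).getLast? = some {c}) ↔
      IsBallot (Icc 1 m) l ∧ Overlapping l ∧ ∀ B ∈ l.getLast?, bmin B < c ∧ c ≤ bmax B := by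
    intro l
    simp [isBallot_extendBySingleton_iff hc hcm, overlapping_extendBySingleton_iff hc,
      getLast?_extendBySingleton]
  symm
  refine Nat.card_eq_of_bijective (fun l => ⟨extendBySingleton c l, (hiff l).mpr l.2⟩) ⟨?_, ?_⟩
  · exact fun l₁ l₂ h => Subtype.ext (extendBySingleton_injective c (congrArg Subtype.val h))
  · rintro ⟨L, hL⟩
    obtain ⟨l, rfl⟩ := exists_extendBySingleton_eq hc hcm hL.1 hL.2.2
    exact ⟨⟨l, (hiff l).mp hL⟩, rfl⟩

theorem Nat.card_eq_sum_card_fiberwise {ι M : Type*} [Finite ι] {f : ι → M} {s : Finset M}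
    (hf : ∀ i, f i ∈ s) : Nat.card ι = ∑ b ∈ s, Nat.card {i // f i = b} := by
  rw [← Finset.card_preimage_eq_sum_card_image_eq fun _ _ => Set.toFinite _,
    Set.preimage_eq_univ_iff.mpr (by simpa [Set.range_subset_iff] using hf), Nat.card_univ]

noncomputable def lastMinMax (l : List (Finset ℕ)) : Option (ℕ × ℕ) :=
  l.getLast?.map fun B => (bmin B, bmax B)

section LastMinMax

variable {m c : ℕ}

lemma lastMinMax_mem_insertNone {l : List (Finset ℕ)} (hl : IsBallot (Icc 1 m) l)
    (hlast : ∀ B ∈ l.getLast?, bmin B < c ∧ c ≤ bmax B) :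
    lastMinMax l ∈ insertNone (Icc 1 (c - 1) ×ˢ Icc c m) := by
  cases h : l.getLast? with
  | none => simp [lastMinMax, h]
  | some B =>
    have hB : B ∈ l := List.mem_of_getLast? h
    have hmin := hl.subset hB (bmin_mem (hl.1 B hB))
    have hmax := hl.subset hB (bmax_mem (hl.1 B hB))
    have := hlast B h
    simp only [mem_Icc] at hmin hmax
    simp only [lastMinMax, h, Option.map_some, some_mem_insertNone, mem_product, mem_Icc]
    omega

lemma card_lastMinMax_eq_none {Q : List (Finset ℕ) → Prop} (hQ : Q []) :
    Nat.card {t : {l // IsBallot (Icc 1 m) l ∧ Q l} // lastMinMax t.1 = none} =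
      if m = 0 then 1 else 0 := by
  have hnil : ∀ l, lastMinMax l = none ↔ l = [] := by simp [lastMinMax]
  split_ifs with hm
  · subst hm
    refine Nat.card_eq_one_iff_exists.mpr ⟨⟨⟨[], by simp [isBallot_nil_iff], hQ⟩, rfl⟩, ?_⟩
    rintro ⟨⟨l, _⟩, hl⟩
    obtain rfl := (hnil l).mp hl
    rfl
  · refine Nat.card_eq_zero.mpr (Or.inl ⟨fun ⟨⟨l, hl, _⟩, hl'⟩ => hm ?_⟩)
    obtain rfl := (hnil l).mp hl'
    simpa [isBallot_nil_iff] using hl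

lemma card_lastMinMax_eq_some {a b : ℕ} (ha : a < c) (hb : c ≤ b) :
    Nat.card {t : {l // IsBallot (Icc 1 m) l ∧ Overlapping l ∧
        ∀ B ∈ l.getLast?, bmin B < c ∧ c ≤ bmax B} // lastMinMax t.1 = some (a, b)} =
      fcd a b m := by
  rw [fcd]
  refine Nat.card_congr ((Equiv.subtypeSubtypeEquivSubtypeInter _
    (fun l => lastMinMax l = some (a, b))).trans
    (Equiv.subtypeEquivRight fun l => ?_))
  simp only [lastMinMax, Option.map_eq_some_iff, Prod.mk.injEq]
  constructor
  · exact fun ⟨⟨hl, hov, _⟩, hB⟩ => ⟨hl, hov, hB⟩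
  · rintro ⟨hl, hov, B, hB, rfl, rfl⟩
    refine ⟨⟨hl, hov, fun B' hB' => ?_⟩, B, hB, rfl, rfl⟩
    obtain rfl : B = B' := Option.some.inj (hB.symm.trans hB')
    exact ⟨ha, hb⟩

end LastMinMax

/-- counting overlapping ballots of `[n]` whose last block is `{c}`. -/
theorem statement5 (n c : ℕ) (hn : 1 ≤ n) (hc : 1 ≤ c) (hcn : c ≤ n) :
    Nat.card {l : List (Finset ℕ) // IsBallot (Finset.Icc 1 n) l ∧ Overlapping l ∧
        l.getLast? = some ({c} : Finset ℕ)} =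
      (if c = 1 ∧ c = n then 1 else 0) +
        ∑ a ∈ Finset.Icc 1 (c - 1), ∑ b ∈ Finset.Icc c (n - 1), fcd a b (n - 1) := by
  obtain ⟨m, rfl⟩ : ∃ m, n = m + 1 := ⟨n - 1, by omega⟩
  have : Finite {l : List (Finset ℕ) // IsBallot (Icc 1 m) l ∧ Overlapping l ∧
      ∀ B ∈ l.getLast?, bmin B < c ∧ c ≤ bmax B} :=
    ((isBallot_finite _).subset fun l hl => hl.1).to_subtype
  rw [card_overlapping_getLast?_eq_singleton hc hcn,
    Nat.card_eq_sum_card_fiberwise fun l => lastMinMax_mem_insertNone l.2.1 l.2.2.2,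
    sum_insertNone, sum_product, card_lastMinMax_eq_none ⟨List.isChain_nil, by simp⟩,
    Nat.add_sub_cancel]
  congr 1
  · exact if_congr (by omega) rfl rfl
  · refine sum_congr rfl fun a ha => sum_congr rfl fun b hb => ?_
    simp only [mem_Icc] at ha hb
    exact card_lastMinMax_eq_some (by omega) hb.1
end

section
/- Let f_{c,d}(n) denote the number of overlapping ballots of [n] whose last block B satisfies min B = c and max B = d. Then for all 1 ≤ c ≤ d ≤ n: f_{c,d}(n) = [c = 1 ∧ d = n] + [c = d]·∑_{a=1}^{c−1}∑_{b=c}^{n} f_{a,b}(n−1) + [c < d]·∑_{ℓ=0}^{d−c−1} C(d−c−1, ℓ) ∑_{a=1}^{d−ℓ−2} ∑_{b=c}^{n−ℓ−2} f_{a,b}(n−ℓ−2), where [p] is 1 if p holds and 0 otherwise and C(·,·) is the binomial coefficient. Moreover f_{c,d}(n) = 0 when c > d. -/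
/-!
Removing the last block `B` of an overlapping ballot of `[n]` with `min B = c` and `max B = d`
leaves either the empty ballot (and then `B = [n]`) or an overlapping ballot of `[n] \ B` whose last
block `C` satisfies `c < max C` and `min C < d`. Relabeling `[n] \ B` by ranks onto `[n - |B|]` is
order preserving, so it keeps the ballot overlapping and turns the condition on `C` into
`min C ≤ d - |B|` and `c ≤ max C`. It remains to sum over `B`: for `c = d` only `B = {c}` occurs,
and for `c < d` the blocks are `B = {c, d} ∪ M` with `M ⊆ (c, d)`, which grouped by `ℓ = |M|`
gives the binomial coefficients.
-/

namespace OverlappingBallot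

open Finset

section MinMax

variable {B : Finset ℕ} {c d x : ℕ}

theorem bmin_eq_min' (hB : B.Nonempty) : bmin B = B.min' hB :=
  hB.csInf_eq_min'

theorem bmax_eq_max' (hB : B.Nonempty) : bmax B = B.max' hB := by
  rw [bmax, max'_eq_sup', sup'_eq_sup]

theorem bmin_mem (hB : B.Nonempty) : bmin B ∈ B :=
  bmin_eq_min' hB ▸ min'_mem B hB

theorem bmax_mem (hB : B.Nonempty) : bmax B ∈ B :=
  bmax_eq_max' hB ▸ max'_mem B hB

theorem bmin_le (hx : x ∈ B) : bmin B ≤ x :=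
  bmin_eq_min' ⟨x, hx⟩ ▸ min'_le B x hx

theorem le_bmax (hx : x ∈ B) : x ≤ bmax B :=
  le_sup (f := id) hx

theorem bmin_le_bmax (hB : B.Nonempty) : bmin B ≤ bmax B :=
  bmin_le (bmax_mem hB)

theorem bmin_image {E : ℕ → ℕ} (hE : Monotone E) (hB : B.Nonempty) :
    bmin (B.image E) = E (bmin B) := by
  rw [bmin_eq_min' (hB.image E), min'_image hE, bmin_eq_min']

theorem bmax_image {E : ℕ → ℕ} (hE : Monotone E) (hB : B.Nonempty) :
    bmax (B.image E) = E (bmax B) := by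
  rw [bmax_eq_max' (hB.image E), max'_image hE, bmax_eq_max']

theorem bmin_eq_and_bmax_eq_iff (hB : B.Nonempty) :
    bmin B = c ∧ bmax B = d ↔ B ⊆ Icc c d ∧ c ∈ B ∧ d ∈ B := by
  constructor
  · rintro ⟨rfl, rfl⟩
    exact ⟨fun x hx => mem_Icc.2 ⟨bmin_le hx, le_bmax hx⟩, bmin_mem hB, bmax_mem hB⟩
  · rintro ⟨hBcd, hc, hd⟩
    exact ⟨(bmin_le hc).antisymm (mem_Icc.1 (hBcd (bmin_mem hB))).1,
      (mem_Icc.1 (hBcd (bmax_mem hB))).2.antisymm (le_bmax hd)⟩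

end MinMax

/-- The order-isomorphic relabeling `S ≃o Icc 1 #S` of the paper, extended monotonically to `ℕ`. -/
def rank (S : Finset ℕ) (x : ℕ) : ℕ := #{y ∈ S | y ≤ x}

section Rank

variable {S : Finset ℕ} {x y : ℕ}

theorem rank_mono : Monotone (rank S) := fun _ _ hxy =>
  card_le_card (monotone_filter_right S fun _ _ hz => hz.trans hxy)

theorem rank_lt_rank (hy : y ∈ S) (hxy : x < y) : rank S x < rank S y := by
  refine card_lt_card ((ssubset_iff_of_subset ?_).2 ⟨y, ?_, ?_⟩)
  · exact monotone_filter_right S fun _ _ hz => hz.trans hxy.le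
  · simp [hy]
  · simp [hxy]

theorem strictMonoOn_rank : StrictMonoOn (rank S) S := fun _ _ _ hy hxy =>
  rank_lt_rank hy hxy

theorem rank_le_rank_iff (hx : x ∈ S) : rank S x ≤ rank S y ↔ x ≤ y :=
  ⟨fun h => not_lt.1 fun hyx => (rank_lt_rank hx hyx).not_ge h, fun h => rank_mono h⟩

theorem image_rank : S.image (rank S) = Icc 1 #S := by
  refine eq_of_subset_of_card_le (fun y hy => ?_) ?_
  · obtain ⟨x, hx, rfl⟩ := mem_image.1 hy
    exact mem_Icc.2 ⟨card_pos.2 ⟨x, by simp [hx]⟩, card_le_card (filter_subset _ S)⟩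
  · rw [card_image_of_injOn strictMonoOn_rank.injOn, Nat.card_Icc, Nat.add_sub_cancel]

variable {n : ℕ} {B : Finset ℕ}

theorem rank_Icc_sdiff_of_subset_Icc (hB : B ⊆ Icc 1 x) (hx : x ≤ n) :
    rank (Icc 1 n \ B) x = x - #B := by
  have : {y ∈ Icc 1 n \ B | y ≤ x} = Icc 1 x \ B := by
    ext y
    simp only [mem_filter, mem_sdiff, mem_Icc]
    exact ⟨fun h => ⟨⟨h.1.1.1, h.2⟩, h.1.2⟩, fun h => ⟨⟨⟨h.1.1, h.1.2.trans hx⟩, h.2⟩, h.1.2⟩⟩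
  rw [rank, this, card_sdiff_of_subset hB, Nat.card_Icc, Nat.add_sub_cancel]

theorem rank_Icc_sdiff_of_lt (hB : ∀ b ∈ B, x < b) (hx : x ≤ n) :
    rank (Icc 1 n \ B) x = x := by
  have : {y ∈ Icc 1 n \ B | y ≤ x} = Icc 1 x := by
    ext y
    simp only [mem_filter, mem_sdiff, mem_Icc]
    exact ⟨fun h => ⟨h.1.1.1, h.2⟩,
      fun h => ⟨⟨⟨h.1, h.2.trans hx⟩, fun hy => (hB y hy).not_ge h.2⟩, h.2⟩⟩
  rw [rank, this, Nat.card_Icc, Nat.add_sub_cancel]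

end Rank

section Ballot

variable {U S T B : Finset ℕ} {l : List (Finset ℕ)}

theorem mem_foldr_union {x : ℕ} : x ∈ l.foldr (· ∪ ·) ∅ ↔ ∃ C ∈ l, x ∈ C := by
  induction l with
  | nil => simp
  | cons C l ih => simp [ih]

theorem IsBallot.subset (hl : IsBallot U l) (hB : B ∈ l) : B ⊆ U :=
  fun _ hx => hl.2.2 ▸ mem_foldr_union.2 ⟨B, hB, hx⟩

theorem IsBallot.nodup (hl : IsBallot U l) : l.Nodup :=
  hl.2.1.imp_of_mem fun hB _ hBC => by
    rintro rfl
    exact (hl.1 _ hB).ne_empty (disjoint_self_iff_empty _ |>.1 hBC)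

theorem finite_setOf_isBallot (U : Finset ℕ) : {l | IsBallot U l}.Finite := by
  have : {l : List U.powerset | l.Nodup}.Finite :=
    Finite.of_fintype {l : List U.powerset // l.Nodup}
  refine (this.image (List.map Subtype.val)).subset fun l hl => ?_
  lift l to List U.powerset using fun B hB => mem_powerset.2 (IsBallot.subset hl hB)
  exact ⟨l, (IsBallot.nodup hl).of_map _, rfl⟩

theorem isBallot_nil : IsBallot U [] ↔ U = ∅ := by
  simp [IsBallot, eq_comm]

theorem foldr_union_append_singleton :
    (l ++ [B]).foldr (· ∪ ·) ∅ = l.foldr (· ∪ ·) ∅ ∪ B := by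
  induction l with
  | nil => simp
  | cons C l ih => simp [ih, union_assoc]

theorem isBallot_append_singleton :
    IsBallot U (l ++ [B]) ↔ IsBallot (U \ B) l ∧ B ⊆ U ∧ B.Nonempty := by
  have hdisj : (∀ C ∈ l, Disjoint C B) ↔ Disjoint (l.foldr (· ∪ ·) ∅) B := by
    simp only [disjoint_left, mem_foldr_union]
    grind
  have hunion : ∀ X : Finset ℕ, X ∪ B = U ∧ Disjoint X B ↔ X = U \ B ∧ B ⊆ U := by
    refine fun X => ⟨fun ⟨hU, hX⟩ => ?_, fun ⟨hX, hB⟩ => ?_⟩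
    · exact ⟨hU ▸ (union_sdiff_cancel_right hX).symm, hU ▸ subset_union_right⟩
    · exact ⟨hX ▸ sdiff_union_of_subset hB, hX ▸ sdiff_disjoint⟩
  simp only [IsBallot, List.mem_append, List.mem_singleton, List.pairwise_append,
    List.pairwise_singleton, foldr_union_append_singleton, or_imp, forall_and, forall_eq,
    true_and, hdisj]
  have := hunion (l.foldr (· ∪ ·) ∅)
  tauto

theorem foldr_union_map_image (E : ℕ → ℕ) :
    (l.map (image E)).foldr (· ∪ ·) ∅ = (l.foldr (· ∪ ·) ∅).image E := by
  ext x
  simp only [mem_foldr_union, List.mem_map, mem_image]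
  grind

theorem disjoint_image_iff_of_injOn {E : ℕ → ℕ} {C D : Finset ℕ} (hE : Set.InjOn E S)
    (hC : C ⊆ S) (hD : D ⊆ S) : Disjoint (C.image E) (D.image E) ↔ Disjoint C D := by
  simp only [disjoint_left, mem_image]
  refine ⟨fun h x hxC hxD => h ⟨x, hxC, rfl⟩ ⟨x, hxD, rfl⟩, ?_⟩
  rintro h _ ⟨x, hx, rfl⟩ ⟨y, hy, hyx⟩
  exact h hx (hE (hD hy) (hC hx) hyx ▸ hy)

theorem isBallot_map_image_iff {E : ℕ → ℕ} (hE : Set.InjOn E S) (hST : S.image E = T)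
    (hl : ∀ C ∈ l, C ⊆ S) : IsBallot T (l.map (image E)) ↔ IsBallot S l := by
  have hU : l.foldr (· ∪ ·) ∅ ⊆ S := fun x hx =>
    let ⟨C, hC, hxC⟩ := mem_foldr_union.1 hx
    hl C hC hxC
  simp only [IsBallot, List.forall_mem_map, image_nonempty, List.pairwise_map,
    foldr_union_map_image, ← hST, image_eq_image_iff_of_injOn hE hU subset_rfl,
    List.Pairwise.iff_of_mem fun hC hD => disjoint_image_iff_of_injOn hE (hl _ hC) (hl _ hD)]

end Ballot

def Overlaps (B C : Finset ℕ) : Prop := bmin C < bmax B ∧ bmin B < bmax C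

section Overlapping

variable {S B : Finset ℕ} {l : List (Finset ℕ)} {E : ℕ → ℕ}

theorem overlapping_iff_isChain : Overlapping l ↔ l.IsChain Overlaps := Iff.rfl

theorem overlapping_append_singleton :
    Overlapping (l ++ [B]) ↔ Overlapping l ∧ ∀ C ∈ l.getLast?, Overlaps C B := by
  simp [overlapping_iff_isChain, List.isChain_append]

theorem overlaps_image_iff (hE : Monotone E) (hES : StrictMonoOn E S) {C : Finset ℕ}
    (hB : B ⊆ S) (hBne : B.Nonempty) (hC : C ⊆ S) (hCne : C.Nonempty) :
    Overlaps (B.image E) (C.image E) ↔ Overlaps B C := by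
  simp only [Overlaps, bmin_image hE, bmax_image hE, hBne, hCne,
    hES.lt_iff_lt (hC (bmin_mem hCne)) (hB (bmax_mem hBne)),
    hES.lt_iff_lt (hB (bmin_mem hBne)) (hC (bmax_mem hCne))]

theorem overlapping_map_image_iff (hE : Monotone E) (hES : StrictMonoOn E S)
    (hl : ∀ C ∈ l, C ⊆ S ∧ C.Nonempty) : Overlapping (l.map (image E)) ↔ Overlapping l := by
  simp only [overlapping_iff_isChain, List.isChain_map]
  exact List.IsChain.iff_of_mem_imp fun B C hB hC =>
    overlaps_image_iff hE hES (hl B hB).1 (hl B hB).2 (hl C hC).1 (hl C hC).2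

end Overlapping

def overlappingBallots (U : Finset ℕ) (p : Finset ℕ → Prop) : Set (List (Finset ℕ)) :=
  {l | IsBallot U l ∧ Overlapping l ∧ ∃ B, l.getLast? = some B ∧ p B}

theorem fcd_eq_ncard (c d n : ℕ) :
    fcd c d n = (overlappingBallots (Icc 1 n) fun B => bmin B = c ∧ bmax B = d).ncard :=
  rfl

section OverlappingBallots

variable {U : Finset ℕ} {p : Finset ℕ → Prop}

theorem finite_overlappingBallots : (overlappingBallots U p).Finite :=
  (finite_setOf_isBallot U).subset fun _ hl => hl.1

theorem ncard_overlappingBallots_eq_sum {ι : Type*} [DecidableEq ι] (f : Finset ℕ → ι)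
    (t : Finset ι) (ht : ∀ C ⊆ U, C.Nonempty → p C → f C ∈ t) :
    (overlappingBallots U p).ncard =
      ∑ i ∈ t, (overlappingBallots U fun C => p C ∧ f C = i).ncard := by
  have hfin := finite_overlappingBallots (U := U) (p := p)
  rw [← hfin.coe_toFinset, Set.ncard_coe_finset,
    card_eq_sum_card_fiberwise (f := fun l => f (l.getLast?.getD ∅)) (t := t)]
  · refine sum_congr rfl fun i _ => ?_
    rw [← Set.ncard_coe_finset]
    congr 1
    ext l
    simp only [coe_filter, Set.Finite.mem_toFinset, overlappingBallots, Set.mem_ofPred_eq]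
    constructor
    · rintro ⟨⟨hl, hov, B, hB, hpB⟩, rfl⟩
      exact ⟨hl, hov, B, hB, hpB, by rw [hB, Option.getD_some]⟩
    · rintro ⟨hl, hov, B, hB, hpB, rfl⟩
      exact ⟨⟨hl, hov, B, hB, hpB⟩, by rw [hB, Option.getD_some]⟩
  · intro l hl
    obtain ⟨hl, -, B, hB, hpB⟩ := hfin.mem_toFinset.1 hl
    have hBl := List.mem_of_getLast? hB
    simpa only [hB, Option.getD_some, mem_coe] using ht B (IsBallot.subset hl hBl) (hl.1 B hBl) hpB

theorem map_image_mem_overlappingBallots_iff {S T : Finset ℕ} {E : ℕ → ℕ} (hE : Monotone E)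
    (hES : StrictMonoOn E S) (hST : S.image E = T) {q : Finset ℕ → Prop}
    (hpq : ∀ C ⊆ S, C.Nonempty → (p C ↔ q (C.image E))) {l : List (Finset ℕ)}
    (hl : ∀ C ∈ l, C ⊆ S) :
    l.map (image E) ∈ overlappingBallots T q ↔ l ∈ overlappingBallots S p := by
  simp only [overlappingBallots, Set.mem_ofPred_eq, isBallot_map_image_iff hES.injOn hST hl,
    List.getLast?_map]
  refine and_congr_right fun hb => ?_
  rw [overlapping_map_image_iff hE hES fun C hC => ⟨hl C hC, hb.1 C hC⟩]
  refine and_congr_right fun _ => ⟨?_, ?_⟩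
  · rintro ⟨_, h, hq⟩
    obtain ⟨B, hB, rfl⟩ := Option.map_eq_some_iff.1 h
    have hBl := List.mem_of_getLast? hB
    exact ⟨B, hB, (hpq B (hl B hBl) (hb.1 B hBl)).2 hq⟩
  · rintro ⟨B, hB, hp⟩
    have hBl := List.mem_of_getLast? hB
    exact ⟨_, by rw [hB, Option.map_some], (hpq B (hl B hBl) (hb.1 B hBl)).1 hp⟩

theorem ncard_overlappingBallots_map {S T : Finset ℕ} {E : ℕ → ℕ} (hE : Monotone E)
    (hES : StrictMonoOn E S) (hST : S.image E = T) {q : Finset ℕ → Prop}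
    (hpq : ∀ C ⊆ S, C.Nonempty → (p C ↔ q (C.image E))) :
    (overlappingBallots S p).ncard = (overlappingBallots T q).ncard := by
  have hmem := fun l => map_image_mem_overlappingBallots_iff hE hES hST hpq (l := l)
  set pre : Finset ℕ → Finset ℕ := fun C => {x ∈ S | E x ∈ C}
  have pre_image : ∀ l ∈ overlappingBallots S p, (l.map (image E)).map pre = l := by
    intro l hl
    refine (List.map_map ..).trans ((List.map_congr_left fun C hC => ?_).trans (List.map_id l))
    ext x
    have hCS := IsBallot.subset hl.1 hC
    simp only [pre, Function.comp_apply, mem_filter, mem_image, id]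
    exact ⟨fun ⟨hx, y, hy, hyx⟩ => hES.injOn (hCS hy) hx hyx ▸ hy, fun hx => ⟨hCS hx, x, hx, rfl⟩⟩
  have image_pre : ∀ l ∈ overlappingBallots T q, (l.map pre).map (image E) = l := by
    intro l hl
    refine (List.map_map ..).trans ((List.map_congr_left fun C hC => ?_).trans (List.map_id l))
    ext y
    have hCT := IsBallot.subset hl.1 hC
    simp only [pre, Function.comp_apply, mem_filter, mem_image, id]
    refine ⟨fun ⟨x, ⟨_, hx⟩, hxy⟩ => hxy ▸ hx, fun hy => ?_⟩
    obtain ⟨x, hx, rfl⟩ := mem_image.1 (hST ▸ hCT hy)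
    exact ⟨x, ⟨hx, hy⟩, rfl⟩
  have himage : (overlappingBallots S p).image (List.map (image E)) = overlappingBallots T q := by
    refine Set.ext fun l => ⟨?_, fun hl => ⟨l.map pre, ?_, image_pre l hl⟩⟩
    · rintro ⟨l, hl, rfl⟩
      exact (hmem l fun C hC => IsBallot.subset hl.1 hC).2 hl
    · refine (hmem _ fun C hC => ?_).1 (by rwa [image_pre l hl])
      obtain ⟨C, -, rfl⟩ := List.mem_map.1 hC
      exact filter_subset _ S
  have hinj : Set.InjOn (List.map (image E)) (overlappingBallots S p) := fun l₁ h₁ l₂ h₂ h => by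
    rw [← pre_image l₁ h₁, h, pre_image l₂ h₂]
  rw [← himage, hinj.ncard_image]

end OverlappingBallots

section LastBlock

variable {U B : Finset ℕ} {l : List (Finset ℕ)}

theorem append_singleton_mem_overlappingBallots_iff (hBU : B ⊆ U) (hB : B.Nonempty) :
    l ++ [B] ∈ overlappingBallots U (· = B) ↔
      IsBallot (U \ B) l ∧ Overlapping l ∧ ∀ C ∈ l.getLast?, Overlaps C B := by
  simp [overlappingBallots, isBallot_append_singleton, overlapping_append_singleton, hBU, hB]

theorem overlappingBallots_eq_union_image_append (hBU : B ⊆ U) (hB : B.Nonempty) :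
    overlappingBallots U (· = B) =
      {l | l = [B] ∧ B = U} ∪ (· ++ [B]) '' overlappingBallots (U \ B) (Overlaps · B) := by
  ext l
  constructor
  · intro hl
    obtain ⟨l, rfl⟩ : ∃ l', l = l' ++ [B] := by
      obtain ⟨-, -, C, hC, rfl⟩ := hl
      exact List.getLast?_eq_some_iff.1 hC
    obtain ⟨hb, hov, hlast⟩ := (append_singleton_mem_overlappingBallots_iff hBU hB).1 hl
    cases h : l.getLast? with
    | none =>
      obtain rfl := List.getLast?_eq_none_iff.1 h
      exact Or.inl ⟨rfl, hBU.antisymm (sdiff_eq_empty_iff_subset.1 (isBallot_nil.1 hb))⟩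
    | some C => exact Or.inr ⟨l, ⟨hb, hov, C, h, hlast C h⟩, rfl⟩
  · rintro (⟨rfl, rfl⟩ | ⟨l, ⟨hb, hov, C, hC, hCB⟩, rfl⟩)
    · exact (append_singleton_mem_overlappingBallots_iff (l := []) hBU hB).2
        ⟨isBallot_nil.2 (Finset.sdiff_self B), List.IsChain.nil, by simp⟩
    · exact (append_singleton_mem_overlappingBallots_iff hBU hB).2
        ⟨hb, hov, by simpa [hC] using hCB⟩

theorem ncard_overlappingBallots_eq_ite_add (hBU : B ⊆ U) (hB : B.Nonempty) :
    (overlappingBallots U (· = B)).ncard =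
      (if B = U then 1 else 0) + (overlappingBallots (U \ B) (Overlaps · B)).ncard := by
  have hdisj : Disjoint {l | l = [B] ∧ B = U}
      ((· ++ [B]) '' overlappingBallots (U \ B) (Overlaps · B)) := by
    refine Set.disjoint_left.2 ?_
    rintro _ ⟨rfl, -⟩ ⟨l, ⟨-, -, C, hC, -⟩, h⟩
    obtain rfl : l = [] := by simpa using h
    simp at hC
  rw [overlappingBallots_eq_union_image_append hBU hB, Set.ncard_union_eq hdisj
    ((Set.finite_singleton [B]).subset fun _ hl => hl.1) (finite_overlappingBallots.image _),
    (List.append_left_injective [B]).injOn.ncard_image]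
  by_cases h : B = U <;> simp [h]

end LastBlock

def blocksWithMinMax (c d : ℕ) : Finset (Finset ℕ) := {B ∈ (Icc c d).powerset | c ∈ B ∧ d ∈ B}

section BlocksWithMinMax

variable {c d : ℕ} {B : Finset ℕ}

theorem mem_blocksWithMinMax : B ∈ blocksWithMinMax c d ↔ B ⊆ Icc c d ∧ c ∈ B ∧ d ∈ B := by
  rw [blocksWithMinMax, mem_filter, mem_powerset]

theorem bmin_bmax_of_mem_blocksWithMinMax (hB : B ∈ blocksWithMinMax c d) :
    bmin B = c ∧ bmax B = d :=
  (bmin_eq_and_bmax_eq_iff ⟨c, (mem_blocksWithMinMax.1 hB).2.1⟩).2 (mem_blocksWithMinMax.1 hB)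

theorem blocksWithMinMax_self : blocksWithMinMax c c = {{c}} := by
  ext B
  simp only [mem_blocksWithMinMax, Icc_self, subset_singleton_iff, mem_singleton, and_self]
  constructor
  · rintro ⟨rfl | rfl, hc⟩ <;> simp_all
  · rintro rfl
    simp

theorem sum_blocksWithMinMax_eq_sum_powerset (hcd : c < d) (g : ℕ → ℕ) :
    ∑ B ∈ blocksWithMinMax c d, g #B = ∑ M ∈ (Ioo c d).powerset, g (#M + 2) := by
  refine sum_nbij' (fun B => B \ {c, d}) (fun M => insert c (insert d M)) ?_ ?_ ?_ ?_ ?_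
  · intro B hB
    rw [mem_blocksWithMinMax] at hB
    simp only [mem_powerset, subset_iff, mem_sdiff, mem_insert, mem_singleton, mem_Ioo]
    intro x hx
    have := mem_Icc.1 (hB.1 hx.1)
    omega
  · intro M hM
    rw [mem_powerset] at hM
    simp only [mem_blocksWithMinMax, insert_subset_iff, mem_insert, true_or, or_true, and_true]
    exact ⟨left_mem_Icc.2 hcd.le, right_mem_Icc.2 hcd.le, hM.trans Ioo_subset_Icc_self⟩
  · intro B hB
    rw [mem_blocksWithMinMax] at hB
    ext x
    simp only [mem_insert, mem_sdiff, mem_singleton]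
    grind
  · intro M hM
    rw [mem_powerset] at hM
    ext x
    have := @hM x
    simp only [mem_insert, mem_sdiff, mem_singleton, mem_Ioo] at this ⊢
    grind
  · intro B hB
    rw [mem_blocksWithMinMax] at hB
    rw [← card_sdiff_add_card_eq_card (insert_subset_iff.2 ⟨hB.2.1, singleton_subset_iff.2 hB.2.2⟩),
      card_pair hcd.ne]

theorem sum_blocksWithMinMax_of_lt (hcd : c < d) (g : ℕ → ℕ) :
    ∑ B ∈ blocksWithMinMax c d, g #B =
      ∑ ℓ ∈ range (d - c), (d - c - 1).choose ℓ * g (ℓ + 2) := by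
  rw [sum_blocksWithMinMax_eq_sum_powerset hcd, sum_powerset_apply_card (fun k => g (k + 2)),
    Nat.card_Ioo, Nat.sub_add_cancel (Nat.sub_pos_of_lt hcd)]
  simp only [smul_eq_mul]

end BlocksWithMinMax

section Recurrence

variable {n c d : ℕ} {B : Finset ℕ}

theorem ncard_overlappingBallots_bmin_le_le_bmax {m N A : ℕ} (hmN : m ≤ N) :
    (overlappingBallots (Icc 1 m) fun C => bmin C ≤ A ∧ c ≤ bmax C).ncard =
      ∑ a ∈ Icc 1 A, ∑ b ∈ Icc c N, fcd a b m := by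
  rw [ncard_overlappingBallots_eq_sum (fun C => (bmin C, bmax C)) (Icc 1 A ×ˢ Icc c N),
    sum_product]
  · refine sum_congr rfl fun a ha => sum_congr rfl fun b hb => ?_
    rw [fcd_eq_ncard]
    congr! 3 with C
    rw [mem_Icc] at ha hb
    simp only [Prod.mk.injEq]
    constructor
    · exact fun h => h.2
    · rintro ⟨rfl, rfl⟩
      exact ⟨⟨ha.2, hb.1⟩, rfl, rfl⟩
  · intro C hC hCne ⟨hA, hc⟩
    have hmin := mem_Icc.1 (hC (bmin_mem hCne))
    have hmax := mem_Icc.1 (hC (bmax_mem hCne))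
    exact mem_product.2 ⟨mem_Icc.2 ⟨hmin.1, hA⟩, mem_Icc.2 ⟨hc, hmax.2.trans hmN⟩⟩

theorem lt_iff_le_rank_Icc_sdiff (hc : 1 ≤ c) (hB : B ∈ blocksWithMinMax c d) (hdn : d ≤ n)
    {x : ℕ} (hx : x ∈ Icc 1 n \ B) : c < x ↔ c ≤ rank (Icc 1 n \ B) x := by
  rw [mem_blocksWithMinMax] at hB
  have hcd := (mem_Icc.1 (hB.1 hB.2.2)).1
  have hrank : rank (Icc 1 n \ B) (c - 1) = c - 1 :=
    rank_Icc_sdiff_of_lt (fun b hb => by have := mem_Icc.1 (hB.1 hb); omega) (by omega)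
  have hxc : x ≠ c := fun h => (mem_sdiff.1 hx).2 (h ▸ hB.2.1)
  have h := rank_le_rank_iff hx (y := c - 1)
  rw [hrank] at h
  constructor
  · intro hcx
    by_contra hlt
    have := h.1 (by omega)
    omega
  · intro hle
    by_contra hcx
    have := h.2 (by omega)
    omega

theorem lt_iff_rank_Icc_sdiff_le (hc : 1 ≤ c) (hB : B ∈ blocksWithMinMax c d) (hdn : d ≤ n)
    {x : ℕ} (hx : x ∈ Icc 1 n \ B) : x < d ↔ rank (Icc 1 n \ B) x ≤ d - #B := by
  rw [mem_blocksWithMinMax] at hB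
  have hrank : rank (Icc 1 n \ B) d = d - #B :=
    rank_Icc_sdiff_of_subset_Icc (hB.1.trans (Icc_subset_Icc_left hc)) hdn
  have hxd : x ≠ d := fun h => (mem_sdiff.1 hx).2 (h ▸ hB.2.2)
  rw [← hrank, rank_le_rank_iff hx]
  omega

theorem ncard_overlappingBallots_overlaps (hc : 1 ≤ c) (hB : B ∈ blocksWithMinMax c d)
    (hdn : d ≤ n) {N : ℕ} (hN : n - #B ≤ N) :
    (overlappingBallots (Icc 1 n \ B) (Overlaps · B)).ncard =
      ∑ a ∈ Icc 1 (d - #B), ∑ b ∈ Icc c N, fcd a b (n - #B) := by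
  have hBn : B ⊆ Icc 1 n := (mem_blocksWithMinMax.1 hB).1.trans (Icc_subset_Icc hc hdn)
  have hcard : #(Icc 1 n \ B) = n - #B := by
    rw [card_sdiff_of_subset hBn, Nat.card_Icc, Nat.add_sub_cancel]
  rw [← ncard_overlappingBallots_bmin_le_le_bmax hN, ← hcard]
  refine ncard_overlappingBallots_map rank_mono strictMonoOn_rank image_rank fun C hC hCne => ?_
  obtain ⟨hmin, hmax⟩ := bmin_bmax_of_mem_blocksWithMinMax hB
  rw [bmin_image rank_mono hCne, bmax_image rank_mono hCne, Overlaps, hmin, hmax,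
    lt_iff_le_rank_Icc_sdiff hc hB hdn (hC (bmax_mem hCne)),
    lt_iff_rank_Icc_sdiff_le hc hB hdn (hC (bmin_mem hCne))]
  exact and_comm

theorem fcd_eq_sum_blocksWithMinMax (hc : 1 ≤ c) (hcd : c ≤ d) (hdn : d ≤ n) :
    fcd c d n = (if c = 1 ∧ d = n then 1 else 0) +
      ∑ B ∈ blocksWithMinMax c d, (overlappingBallots (Icc 1 n \ B) (Overlaps · B)).ncard := by
  rw [fcd_eq_ncard, ncard_overlappingBallots_eq_sum id (blocksWithMinMax c d)
    fun C _ hC hp => mem_blocksWithMinMax.2 ((bmin_eq_and_bmax_eq_iff hC).1 hp)]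
  have hIcc : Icc 1 n ∈ blocksWithMinMax c d ↔ c = 1 ∧ d = n := by
    rw [mem_blocksWithMinMax, Icc_subset_Icc_iff (by omega), mem_Icc, mem_Icc]
    omega
  rw [← if_congr hIcc rfl rfl, ← sum_ite_eq' (blocksWithMinMax c d) (Icc 1 n) fun _ => 1,
    ← sum_add_distrib]
  refine sum_congr rfl fun B hB => ?_
  obtain ⟨hBcd, hcB, -⟩ := mem_blocksWithMinMax.1 hB
  have hpred : (fun C => (bmin C = c ∧ bmax C = d) ∧ id C = B) = (· = B) := by
    ext C
    exact ⟨fun h => h.2, fun h => ⟨h ▸ bmin_bmax_of_mem_blocksWithMinMax hB, h⟩⟩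
  rw [hpred, ncard_overlappingBallots_eq_ite_add (hBcd.trans (Icc_subset_Icc hc hdn)) ⟨c, hcB⟩]

theorem fcd_eq_zero_of_lt (h : d < c) : fcd c d n = 0 := by
  have : (overlappingBallots (Icc 1 n) fun B => bmin B = c ∧ bmax B = d) = ∅ := by
    refine Set.eq_empty_of_forall_notMem ?_
    rintro l ⟨hl, -, B, hB, rfl, rfl⟩
    exact h.not_ge (bmin_le_bmax (hl.1 B (List.mem_of_getLast? hB)))
  rw [fcd_eq_ncard, this, Set.ncard_empty]

end Recurrence

end OverlappingBallot

open OverlappingBallot Finset in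
/-- the recurrence for `f_{c,d}(n)`, and `f_{c,d}(n) = 0` when `c > d`. -/
theorem statement6 (n c d : ℕ) :
    (1 ≤ c → c ≤ d → d ≤ n →
      fcd c d n =
        (if c = 1 ∧ d = n then 1 else 0) +
        (if c = d then
          ∑ a ∈ Finset.Icc 1 (c - 1), ∑ b ∈ Finset.Icc c n, fcd a b (n - 1)
        else 0) +
        (if c < d then
          ∑ ℓ ∈ Finset.range (d - c), Nat.choose (d - c - 1) ℓ *
            ∑ a ∈ Finset.Icc 1 (d - ℓ - 2), ∑ b ∈ Finset.Icc c (n - ℓ - 2),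
              fcd a b (n - ℓ - 2)
        else 0)) ∧
    (d < c → fcd c d n = 0) := by
  refine ⟨fun hc hcd hdn => ?_, fcd_eq_zero_of_lt⟩
  rw [fcd_eq_sum_blocksWithMinMax hc hcd hdn]
  rcases hcd.eq_or_lt with rfl | hlt
  · rw [blocksWithMinMax_self, sum_singleton,
      ncard_overlappingBallots_overlaps hc (by simp [blocksWithMinMax_self]) hdn (Nat.sub_le n _)]
    simp
  · rw [sum_congr rfl fun B hB => ncard_overlappingBallots_overlaps hc hB hdn le_rfl,
      sum_blocksWithMinMax_of_lt hlt fun k =>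
        ∑ a ∈ Icc 1 (d - k), ∑ b ∈ Icc c (n - k), fcd a b (n - k)]
    simp [hlt, hlt.ne, Nat.sub_sub]
end

section
/- For every permutation π of [n], the permutation P(π) obtained by reversing each maximal descending run of π satisfies the pop-stacked condition: for each pair of adjacent maximal ascending runs Rᵢ, Rᵢ₊₁ of P(π), min Rᵢ < max Rᵢ₊₁. -/
/-!
Write `P(π) = B₁ ⋯ Bₘ` with `Bᵢ = Dᵢʳ` increasing. Since the descending runs are maximal and
the entries distinct, the last entry of `Dᵢ` is smaller than the first entry of `Dᵢ₊₁`, i.e.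
`head Bᵢ < last Bᵢ₊₁`. Each ascending run of `P(π)` is a union of consecutive blocks, so if
runs `R`, `S` meet between `Bᵢ` and `Bᵢ₊₁`, then `min R ≤ head Bᵢ < last Bᵢ₊₁ ≤ max S`.
-/

lemma ascRuns_cons_of_lt {a b : ℕ} {l r : List ℕ} {rs : List (List ℕ)}
    (hab : a < b) (h : ascRuns l = (b :: r) :: rs) :
    ascRuns (a :: l) = (a :: b :: r) :: rs := by
  simp [ascRuns, h, hab]

lemma ascRuns_cons_of_not_lt {a b : ℕ} {l r : List ℕ} {rs : List (List ℕ)}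
    (hab : ¬ a < b) (h : ascRuns l = (b :: r) :: rs) :
    ascRuns (a :: l) = [a] :: (b :: r) :: rs := by
  simp [ascRuns, h, hab]

lemma exists_ascRuns_cons (a : ℕ) (l : List ℕ) :
    ∃ r rs, ascRuns (a :: l) = (a :: r) :: rs := by
  match h : ascRuns l with
  | (b :: r) :: rs =>
    by_cases hab : a < b
    · exact ⟨b :: r, rs, ascRuns_cons_of_lt hab h⟩
    · exact ⟨[], (b :: r) :: rs, ascRuns_cons_of_not_lt hab h⟩
  | [] | [] :: _ => exact ⟨[], [], by simp [ascRuns, h]⟩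

/-- An increasing block `B` in front of `l` either merges into the first ascending run of `l`
or forms an ascending run of its own. -/
lemma exists_ascRuns_append {B : List ℕ} (hB : B.IsChain (· < ·)) (hne : B ≠ []) (l : List ℕ) :
    ∃ r rs, ascRuns (B ++ l) = (B ++ r) :: rs ∧
      (ascRuns l = r :: rs ∨ r = [] ∧ ascRuns l = rs) := by
  match B, l with
  | [a], [] => exact ⟨[], [], by simp [ascRuns]⟩
  | [a], x :: t =>
    obtain ⟨r, rs, h⟩ := exists_ascRuns_cons x t
    by_cases hax : a < x
    · exact ⟨x :: r, rs, ascRuns_cons_of_lt hax h, .inl h⟩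
    · exact ⟨[], (x :: r) :: rs, ascRuns_cons_of_not_lt hax h, .inr ⟨rfl, h⟩⟩
  | a :: b :: B, l =>
    rw [List.isChain_cons_cons] at hB
    obtain ⟨r, rs, h, hl⟩ := exists_ascRuns_append hB.2 (List.cons_ne_nil b B) l
    exact ⟨r, rs, ascRuns_cons_of_lt hB.1 h, hl⟩

lemma lmin_le_of_mem {a : ℕ} {l : List ℕ} (h : a ∈ l) : lmin l ≤ a := Nat.sInf_le h

lemma le_lmax_of_mem {a : ℕ} {l : List ℕ} (h : a ∈ l) : a ≤ lmax l := by
  induction l with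
  | nil => simp at h
  | cons b t ih =>
    rcases List.mem_cons.mp h with rfl | h
    · exact le_max_left _ _
    · exact (ih h).trans (le_max_right _ _)

lemma lmin_append_le (u : List ℕ) {v : List ℕ} (hv : v ≠ []) : lmin (u ++ v) ≤ lmin v :=
  lmin_le_of_mem <| List.mem_append_right u <|
    Nat.sInf_mem (s := {x | x ∈ v}) ⟨v.head hv, List.head_mem hv⟩

theorem isChain_ascRuns_flatten (bs : List (List ℕ)) (hne : ∀ B ∈ bs, B ≠ [])
    (hinc : ∀ B ∈ bs, B.IsChain (· < ·))
    (hbs : bs.IsChain fun B C => ∀ a ∈ B.head?, ∀ b ∈ C.getLast?, a < b) :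
    (ascRuns bs.flatten).IsChain fun R S => lmin R < lmax S := by
  match bs with
  | [] => simp [ascRuns]
  | [B] =>
    obtain ⟨r, rs, h, hl | ⟨-, hl⟩⟩ := exists_ascRuns_append (hinc B (by simp)) (hne B (by simp)) []
    all_goals simp_all [ascRuns]
  | B :: C :: bs =>
    simp only [List.mem_cons, forall_eq_or_imp] at hne hinc
    rw [List.isChain_cons_cons] at hbs
    have ih := isChain_ascRuns_flatten (C :: bs) (by simpa using hne.2)
      (by simpa using hinc.2) hbs.2
    obtain ⟨r, rs, hC, -⟩ := exists_ascRuns_append hinc.2.1 hne.2.1 bs.flatten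
    simp only [List.flatten_cons] at ih ⊢
    rw [hC] at ih
    obtain ⟨r', rs', hB, hmerge | ⟨rfl, hsplit⟩⟩ :=
      exists_ascRuns_append hinc.1 hne.1 (C ++ bs.flatten)
    · obtain ⟨rfl, rfl⟩ := List.cons.inj (hC.symm.trans hmerge)
      rw [hB]
      refine List.IsChain.imp_head (R := fun R S => lmin R < lmax S)
        (fun h => (lmin_append_le B ?_).trans_lt h) ih
      exact List.append_ne_nil_of_left_ne_nil hne.2.1 r
    · rw [hB, ← hsplit, hC]
      refine ih.cons_cons ?_
      calc lmin (B ++ []) ≤ B.head hne.1 := lmin_le_of_mem (by simp [List.head_mem])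
        _ < C.getLast hne.2.1 := hbs.1 _ (by simp [List.head?_eq_some_head hne.1]) _
            (by simp [List.getLast?_eq_some_getLast hne.2.1])
        _ ≤ lmax (C ++ r) := le_lmax_of_mem (by simp [List.getLast_mem])

lemma ne_nil_of_mem_descRuns {l D : List ℕ} (hD : D ∈ descRuns l) : D ≠ [] := by
  induction l generalizing D with
  | nil => simp [descRuns] at hD
  | cons a l ih =>
    match h : descRuns l with
    | (b :: r) :: rs =>
      rw [h] at ih
      by_cases hba : b < a <;> simp [descRuns, h, hba] at hD <;> grind
    | [] | [] :: _ => simp [descRuns, h] at hD; simp [hD]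

lemma descRuns_flatten (l : List ℕ) : (descRuns l).flatten = l := by
  induction l with
  | nil => simp [descRuns]
  | cons a l ih =>
    match h : descRuns l with
    | (b :: r) :: rs =>
      have : (descRuns (a :: l)).flatten = a :: ((b :: r) :: rs).flatten := by
        by_cases hba : b < a <;> simp [descRuns, h, hba]
      rw [this, ← h, ih]
    | [] => rw [h] at ih; simp_all [descRuns]
    | [] :: _ => exact absurd rfl (ne_nil_of_mem_descRuns (by rw [h]; exact List.mem_cons_self))

lemma isChain_gt_of_mem_descRuns {l D : List ℕ} (hD : D ∈ descRuns l) : D.IsChain (· > ·) := by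
  induction l generalizing D with
  | nil => simp [descRuns] at hD
  | cons a l ih =>
    match h : descRuns l with
    | (b :: r) :: rs =>
      rw [h] at ih
      by_cases hba : b < a <;> simp [descRuns, h, hba] at hD
      · rcases hD with rfl | hD
        · exact (ih (by simp)).cons_cons hba
        · exact ih (by simp [hD])
      · rcases hD with rfl | hD
        · exact .singleton a
        · exact ih (by simpa using hD)
    | [] | [] :: _ => simp [descRuns, h] at hD; simp [hD]

lemma isChain_descRuns {l : List ℕ} (hl : l.Nodup) :
    (descRuns l).IsChain fun D E => ∀ a ∈ D.getLast?, ∀ b ∈ E.head?, a < b := by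
  induction l with
  | nil => simp [descRuns]
  | cons a l ih =>
    obtain ⟨hal, hl⟩ := List.nodup_cons.mp hl
    specialize ih hl
    match h : descRuns l with
    | (b :: r) :: rs =>
      rw [h] at ih
      by_cases hba : b < a
      · simp only [descRuns, h, hba, if_true]
        exact ih.imp_head fun hE x hx => hE x (by simpa [List.getLast?_cons_cons] using hx)
      · have hbl : b ∈ l := by rw [← descRuns_flatten l, h]; simp
        have hab : a < b := (not_lt.mp hba).lt_of_ne (by rintro rfl; exact hal hbl)
        simp only [descRuns, h, hba, if_false]
        exact ih.cons_cons (by simpa using hab)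
    | [] | [] :: _ => simp [descRuns, h]

/-- for any permutation `π` of `[n]`, `P(π)` satisfies the pop-stacked
condition on adjacent ascending runs. -/
theorem statement14 (n : ℕ) (π : List ℕ) (hπ : IsPermOf n π) :
    (ascRuns (popStack π)).Chain' (fun R S => lmin R < lmax S) := by
  have hnd : π.Nodup := hπ.nodup_iff.mpr List.nodup_range'
  apply isChain_ascRuns_flatten
  · simpa using fun B hB => by simpa using ne_nil_of_mem_descRuns hB
  · simpa using fun B hB => by simpa [List.isChain_reverse] using isChain_gt_of_mem_descRuns hB
  · rw [List.isChain_map]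
    exact (isChain_descRuns hnd).imp fun D E h => by simpa using h
end

section
/- The number of pop-stacked permutations of [n] grows superexponentially: for every constant C > 0, the count f(n) exceeds Cⁿ for all sufficiently large n. In particular, the ordinary generating function ∑ f(n)xⁿ has radius of convergence 0. -/
open List Filter
open scoped Nat

lemma descRuns_cons_of_lt {a c : ℕ} {l r : List ℕ} {rs : List (List ℕ)}
    (h : descRuns l = (c :: r) :: rs) (hc : c < a) :
    descRuns (a :: l) = (a :: c :: r) :: rs := by
  simp only [descRuns, h, if_pos hc]

lemma descRuns_cons_of_not_lt {a c : ℕ} {l r : List ℕ} {rs : List (List ℕ)}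
    (h : descRuns l = (c :: r) :: rs) (hc : ¬ c < a) :
    descRuns (a :: l) = [a] :: (c :: r) :: rs := by
  simp only [descRuns, h, if_neg hc]

lemma exists_descRuns_cons (a : ℕ) (l : List ℕ) :
    ∃ r rs, descRuns (a :: l) = (a :: r) :: rs := by
  rcases h : descRuns l with _ | ⟨_ | ⟨c, r⟩, rs⟩
  · exact ⟨[], [], by simp only [descRuns, h]⟩
  · exact ⟨[], [], by simp only [descRuns, h]⟩
  · by_cases hc : c < a
    · exact ⟨c :: r, rs, descRuns_cons_of_lt h hc⟩
    · exact ⟨[], (c :: r) :: rs, descRuns_cons_of_not_lt h hc⟩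

lemma descRuns_cons_append {x : ℕ} {R l : List ℕ} (hdesc : (x :: R).IsChain (· > ·))
    (hasc : ∀ z ∈ l.head?, (x :: R).getLast (cons_ne_nil x R) ≤ z) :
    descRuns (x :: R ++ l) = (x :: R) :: descRuns l := by
  induction R generalizing x with
  | nil =>
    rcases l with _ | ⟨z, l⟩
    · simp [descRuns]
    · obtain ⟨r, rs, h⟩ := exists_descRuns_cons z l
      rw [cons_append, nil_append, h]
      exact descRuns_cons_of_not_lt h (not_lt.2 (hasc z rfl))
  | cons y R ih =>
    rw [isChain_cons_cons] at hdesc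
    have h := ih hdesc.2 (by simpa using hasc)
    rw [cons_append] at h ⊢
    exact descRuns_cons_of_lt h hdesc.1

lemma popStack_cons_append {x : ℕ} {R l : List ℕ} (hdesc : (x :: R).IsChain (· > ·))
    (hasc : ∀ z ∈ l.head?, (x :: R).getLast (cons_ne_nil x R) ≤ z) :
    popStack (x :: R ++ l) = (x :: R).reverse ++ popStack l := by
  rw [popStack, descRuns_cons_append hdesc hasc, map_cons, flatten_cons, popStack]

lemma popStack_eq_self_of_isChain_lt : ∀ {l : List ℕ}, l.IsChain (· < ·) → popStack l = l
  | [], _ => rfl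
  | [x], _ => by simp [popStack, descRuns]
  | x :: y :: l, h => by
    rw [isChain_cons_cons] at h
    have hx := popStack_cons_append (R := []) (l := y :: l) (.singleton x) (by simpa using h.1.le)
    simpa [popStack_eq_self_of_isChain_lt h.2] using hx

lemma popStack_interleave_append :
    ∀ {a b : List ℕ} (t : List ℕ), a.length = b.length → (∀ x ∈ a, ∀ y ∈ b, x < y) →
      (∀ x ∈ a, ∀ z ∈ t, x < z) → popStack (b.interleave a ++ t) = a.interleave b ++ popStack t
  | [], [], t, _, _, _ => by simp
  | [], _ :: _, _, hlen, _, _ | _ :: _, [], _, hlen, _, _ => by simp at hlen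
  | x :: a, y :: b, t, hlen, hab, hat => by
    have hhead : ∀ z ∈ (b.interleave a ++ t).head?, x ≤ z := by
      intro z hz
      rcases b with _ | ⟨y', b⟩
      · obtain rfl : a = [] := length_eq_zero_iff.1 (by simpa using hlen)
        exact (hat x mem_cons_self z (mem_of_mem_head? (by simpa using hz))).le
      · rw [cons_interleave, cons_append, head?_cons, Option.mem_some_iff] at hz
        exact (hab x mem_cons_self z (by simp [hz])).le
    have h := popStack_cons_append (R := [x]) (l := b.interleave a ++ t)
      (.cons_cons (hab x mem_cons_self y mem_cons_self) (.singleton x)) hhead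
    simp only [cons_interleave, cons_append, nil_append] at h ⊢
    rw [h, popStack_interleave_append t (by simpa using hlen)
      (fun u hu v hv => hab u (mem_cons_of_mem _ hu) v (mem_cons_of_mem _ hv))
      (fun u hu z hz => hat u (mem_cons_of_mem _ hu) z hz)]
    simp

lemma interleave_left_inj {α : Type*} :
    ∀ {a a' b : List α}, a.length = b.length → a'.length = b.length →
      a.interleave b = a'.interleave b → a = a'
  | [], [], _, _, _, _ => rfl
  | [], _ :: _, _, hlen, hlen', _ | _ :: _, [], _, hlen, hlen', _ => by
    simp only [length_nil, length_cons] at hlen hlen'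
    omega
  | x :: a, x' :: a', [], hlen, _, _ => by simp at hlen
  | x :: a, x' :: a', y :: b, hlen, hlen', h => by
    simp only [cons_interleave, cons.injEq] at h
    rw [h.1, interleave_left_inj (by simpa using hlen) (by simpa using hlen') h.2.2]

lemma setOf_isPermOf_finite (n : ℕ) : {σ | IsPermOf n σ}.Finite :=
  (range' 1 n).permutations.finite_toSet.subset fun _ h => mem_permutations.2 h

lemma range'_one_split {m n : ℕ} (h : 2 * m ≤ n) :
    range' 1 m ++ range' (m + 1) m ++ range' (2 * m + 1) (n - 2 * m) = range' 1 n := by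
  rw [add_comm m 1, range'_append_1, two_mul, add_comm (m + m) 1, range'_append_1]
  congr 1
  omega

lemma isPopStacked_interleave_append {m n : ℕ} (hmn : 2 * m ≤ n) {a : List ℕ}
    (ha : a ~ range' 1 m) :
    IsPermOf n (a.interleave (range' (m + 1) m) ++ range' (2 * m + 1) (n - 2 * m)) ∧
      IsPopStacked n (a.interleave (range' (m + 1) m) ++ range' (2 * m + 1) (n - 2 * m)) := by
  set b := range' (m + 1) m
  set t := range' (2 * m + 1) (n - 2 * m)
  have hlen : a.length = b.length := by simp [b, ha.length_eq]
  have hab : ∀ x ∈ a, ∀ y ∈ b, x < y := by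
    intro x hx y hy
    rw [ha.mem_iff, mem_range'_1] at hx
    rw [mem_range'_1] at hy
    omega
  have hat : ∀ x ∈ a, ∀ z ∈ t, x < z := by
    intro x hx z hz
    rw [ha.mem_iff, mem_range'_1] at hx
    rw [mem_range'_1] at hz
    omega
  have hperm : IsPermOf n (a.interleave b ++ t) := by
    rw [IsPermOf, ← range'_one_split hmn]
    exact (interleave_perm_append.trans (ha.append_right b)).append_right t
  refine ⟨hperm, b.interleave a ++ t, ?_, ?_⟩
  · exact (interleave_perm_append.trans (perm_append_comm.trans
      interleave_perm_append.symm)).append_right t |>.trans hperm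
  · rw [popStack_interleave_append t hlen hab hat,
      popStack_eq_self_of_isChain_lt ((isChain_range' _ _ 1).imp (by omega))]

lemma factorial_le_popCount {m n : ℕ} (hmn : 2 * m ≤ n) : m ! ≤ popCount n := by
  classical
  let F : (range' 1 m).permutations.toFinset → {σ // IsPermOf n σ ∧ IsPopStacked n σ} :=
    fun a => ⟨_, isPopStacked_interleave_append hmn (mem_permutations.1 (mem_toFinset.1 a.2))⟩
  have hF : Function.Injective F := by
    rintro ⟨a, ha⟩ ⟨a', ha'⟩ h
    rw [mem_toFinset, mem_permutations] at ha ha'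
    have hlen {a : List ℕ} (ha : a ~ range' 1 m) : a.length = (range' (m + 1) m).length := by
      simp [ha.length_eq]
    exact Subtype.ext (interleave_left_inj (hlen ha) (hlen ha')
      (append_cancel_right (congrArg Subtype.val h)))
  have : Finite {σ // IsPermOf n σ ∧ IsPopStacked n σ} :=
    ((setOf_isPermOf_finite n).subset fun _ h => h.1).to_subtype
  calc m ! = Nat.card (range' 1 m).permutations.toFinset := by
        rw [Nat.card_eq_finsetCard, toFinset_card_of_nodup (nodup_permutations _ nodup_range'),
          length_permutations, length_range']
    _ ≤ popCount n := Nat.card_le_card_of_injective F hF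

lemma eventually_pow_lt_factorial_div_two (C : ℝ) : ∀ᶠ n in atTop, C ^ n < ((n / 2)! : ℝ) := by
  obtain ⟨c, hc⟩ := exists_nat_gt |C|
  have hc0 : 0 < c := by exact_mod_cast (abs_nonneg C).trans_lt hc
  have hfac := (Nat.tendsto_div_const_atTop two_ne_zero).eventually
    (by simpa using Nat.eventually_pow_lt_factorial_sub (c ^ 3) 0)
  filter_upwards [hfac, eventually_ge_atTop 2] with n hn hn2
  have hnat : c ^ n < (n / 2)! :=
    calc c ^ n ≤ c ^ (3 * (n / 2)) := Nat.pow_le_pow_right hc0 (by omega)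
      _ = (c ^ 3) ^ (n / 2) := pow_mul c 3 (n / 2)
      _ < (n / 2)! := hn
  calc C ^ n ≤ |C| ^ n := (le_abs_self _).trans (abs_pow C n).le
    _ ≤ (c : ℝ) ^ n := pow_le_pow_left₀ (abs_nonneg C) hc.le n
    _ < (n / 2)! := by exact_mod_cast hnat

/-- the number of pop-stacked permutations grows superexponentially,
so its ordinary generating function has radius of convergence 0. -/
theorem statement17 :
    (∀ C : ℝ, 0 < C → ∃ N : ℕ, ∀ n ≥ N, C ^ n < (popCount n : ℝ)) ∧
    (∀ x : ℝ, 0 < x → ¬ Summable fun n : ℕ => (popCount n : ℝ) * x ^ n) := by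
  have key (C : ℝ) : ∀ᶠ n : ℕ in atTop, C ^ n < popCount n :=
    (eventually_pow_lt_factorial_div_two C).mono fun n hn =>
      hn.trans_le (by exact_mod_cast factorial_le_popCount (Nat.mul_div_le n 2))
  refine ⟨fun C _ => eventually_atTop.1 (key C), fun x hx hsum => ?_⟩
  have hone : ∀ᶠ n in atTop, 1 < (popCount n : ℝ) * x ^ n := (key x⁻¹).mono fun n hn => by
    rwa [inv_pow, inv_lt_iff_one_lt_mul₀ (by positivity)] at hn
  obtain ⟨n, hsmall, hbig⟩ :=
    ((hsum.tendsto_atTop_zero.eventually (gt_mem_nhds one_pos)).and hone).exists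
  exact hsmall.not_gt hbig
end
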